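/- Let p ∈ S_ℓ with k = ℓ−2, let n ≥ k, and H ⊆ {1,...,n} with |H| = k. Define the order graph G_n^H(p): a tournament on the non-hole positions I = [n]∖H, with I partitioned into intervals I₁,…,I_{k+1} by the holes, where for positions i < j with i ∈ I_a, j ∈ I_b, there is an edge i→j if p_a > p_{b+1} and an edge j→i if p_a < p_{b+1}. Then the following are equivalent: (1) s_n^H(p) = 1; (2) G_n^H(p) has no directed cycle; (3) G_n^H(p) has no directed cycle of length 3. -/

import Mathlib

open Finset

/-- The word `σ` contains the pattern `p`: there is a subsequence of `σ`
order-isomorphic to `p`. -/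
def ContainsPat {n ℓ : ℕ} {α β : Type*} [LinearOrder α] [LinearOrder β]
    (σ : Fin n → α) (p : Fin ℓ → β) : Prop :=
  ∃ g : Fin ℓ → Fin n, StrictMono g ∧ ∀ a b : Fin ℓ, σ (g a) < σ (g b) ↔ p a < p b

/-- `σ ∈ S_n` is an extension of the partial permutation `π`: on the non-hole
positions, the relative order of the values of `σ` matches that of `π`. -/
def IsExtension {n : ℕ} {α : Type*} [LinearOrder α]
    (σ : Equiv.Perm (Fin n)) (π : Fin n → Option α) : Prop :=
  ∀ i j : Fin n, ∀ vi vj : α, π i = some vi → π j = some vj → (σ i < σ j ↔ vi < vj)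

/-- The partial permutation `π` avoids the pattern `p`: every extension avoids `p`. -/
def PPAvoids {n ℓ : ℕ} {α β : Type*} [LinearOrder α] [LinearOrder β]
    (π : Fin n → Option α) (p : Fin ℓ → β) : Prop :=
  ∀ σ : Equiv.Perm (Fin n), IsExtension σ π → ¬ ContainsPat (⇑σ) p

/-- `π` is a partial permutation of length `n` with `k` holes: each value of
`{1,…,n-k}` appears exactly once and there are exactly `k` holes. -/
def IsPPerm {n : ℕ} (k : ℕ) (π : Fin n → Option (Fin (n - k))) : Prop :=
  (Finset.univ.filter fun i => π i = none).card = k ∧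
    ∀ v : Fin (n - k), ∃! i : Fin n, π i = some v

/-- `π` is a partial permutation whose holes are exactly at the positions in `H`. -/
def IsPPermH {n : ℕ} (H : Finset (Fin n)) (π : Fin n → Option (Fin (n - H.card))) : Prop :=
  (∀ i, π i = none ↔ i ∈ H) ∧ ∀ v : Fin (n - H.card), ∃! i : Fin n, π i = some v

/-- `s_n^k(p)`: the number of `p`-avoiding partial permutations of length `n`
with `k` holes. -/
noncomputable def snk (n k : ℕ) {ℓ : ℕ} (p : Fin ℓ → Fin ℓ) : ℕ :=
  Nat.card {π : Fin n → Option (Fin (n - k)) // IsPPerm k π ∧ PPAvoids π p}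

/-- `s_n^H(p)`: the number of `p`-avoiding partial permutations of length `n`
with hole set `H`. -/
noncomputable def snH {n ℓ : ℕ} (H : Finset (Fin n)) (p : Fin ℓ → Fin ℓ) : ℕ :=
  Nat.card {π : Fin n → Option (Fin (n - H.card)) // IsPPermH H π ∧ PPAvoids π p}

/-- The number of permutations of length `m` avoiding the pattern `p`. -/
noncomputable def avoidCount (m : ℕ) {ℓ : ℕ} (p : Fin ℓ → Fin ℓ) : ℕ :=
  Nat.card {σ : Equiv.Perm (Fin m) // ¬ ContainsPat (⇑σ) p}

/-- `p` is a Baxter permutation: no indices `a < b < c = b+1 < d` such that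
`(p a, p b, p c, p d)` is order-isomorphic to `2413` or `3142`. -/
def IsBaxter {ℓ : ℕ} (p : Fin ℓ → Fin ℓ) : Prop :=
  ¬ ∃ a b c d : Fin ℓ, a < b ∧ (b : ℕ) + 1 = (c : ℕ) ∧ c < d ∧
    ((p c < p a ∧ p a < p d ∧ p d < p b) ∨ (p b < p d ∧ p d < p a ∧ p a < p c))

/-!
A partial permutation `π` with hole set `H` has an extension containing `p` iff two non-holes
`u < v`, lying in the intervals `I_a` and `I_b`, carry values ordered like `p_a, p_{b+1}`.
Such a pair extends to an occurrence of `p` by giving the `k` holes rational values ordered like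
the remaining entries of `p` (an affine map interpolates between the two fixed values).
Conversely, along an occurrence of `p` the number of holes to the left of the `a`-th entry minus
`a` is `≥ 0` at the first non-hole entry and `< 0` at the last one, and it drops by at most one
between consecutive non-hole entries; where it first drops, the two entries form such a pair.
Hence `π` avoids `p` iff its values increase along the edges of `G_n^H(p)`. A labelling of the
vertices of a tournament by `0, …, |I| - 1` increasing along the edges exists iff the tournament
is transitive, and it is then unique (a vertex is labelled by its in-degree); finally a
tournament is transitive iff it has no directed cycle iff it has no directed 3-cycle.
-/

theorem Rat.exists_strictMono_of_lt_iff {x₁ x₂ y₁ y₂ : ℚ} (hx : x₁ ≠ x₂) (hy : y₁ ≠ y₂)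
    (h : x₁ < x₂ ↔ y₁ < y₂) : ∃ φ : ℚ → ℚ, StrictMono φ ∧ φ x₁ = y₁ ∧ φ x₂ = y₂ := by
  have hslope : 0 < (y₂ - y₁) / (x₂ - x₁) := by
    rcases hx.lt_or_gt with hlt | hlt
    · exact div_pos (sub_pos.2 (h.1 hlt)) (sub_pos.2 hlt)
    · exact div_pos_of_neg_of_neg
        (sub_neg.2 ((hy.symm.lt_or_gt).resolve_right (hlt.not_gt ∘ h.2)))
        (sub_neg.2 hlt)
  refine ⟨fun x => y₁ + (y₂ - y₁) / (x₂ - x₁) * (x - x₁), fun a b hab => ?_, by simp, ?_⟩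
  · exact add_lt_add_right (mul_lt_mul_of_pos_left (sub_lt_sub_right hab _) hslope) _
  · field_simp [sub_ne_zero.2 hx.symm]
    ring

theorem exists_rat_lt_iff_of_two_values {ℓ m : ℕ} {p : Fin ℓ → Fin m}
    (hp : Function.Injective p) {α β : Fin ℓ} (hαβ : α ≠ β) {y₁ y₂ : ℚ} (hy : y₁ ≠ y₂)
    (h : y₁ < y₂ ↔ p α < p β) :
    ∃ ψ : Fin ℓ → ℚ, (∀ w w', ψ w < ψ w' ↔ p w < p w') ∧ ψ α = y₁ ∧ ψ β = y₂ := by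
  obtain ⟨φ, hφ, h₁, h₂⟩ := Rat.exists_strictMono_of_lt_iff (x₁ := ((p α : ℕ) : ℚ))
    (x₂ := ((p β : ℕ) : ℚ)) (by exact_mod_cast Fin.val_ne_of_ne (hp.ne hαβ)) hy
    (by simpa using h.symm)
  exact ⟨fun w => φ ((p w : ℕ) : ℚ), fun w w' => by simp [hφ.lt_iff_lt], h₁, h₂⟩

theorem exists_perm_lt_iff {n : ℕ} {α : Type*} [LinearOrder α] (f : Fin n → α) :
    ∃ σ : Equiv.Perm (Fin n), ∀ i j, (f i = f j → i = j) → (σ i < σ j ↔ f i < f j) := by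
  have hσ : ∀ i j, f i < f j → (Tuple.sort f).symm i < (Tuple.sort f).symm j := fun i j hij =>
    lt_of_not_ge fun hji => hij.not_ge (by simpa using Tuple.monotone_sort f hji)
  refine ⟨(Tuple.sort f).symm, fun i j hij => ⟨fun h => ?_, hσ i j⟩⟩
  rcases lt_trichotomy (f i) (f j) with hlt | heq | hgt
  · exact hlt
  · exact absurd h (by rw [hij heq]; exact lt_irrefl _)
  · exact absurd (hσ j i hgt) h.not_gt

theorem Finset.card_filter_lt_add_card_le {α : Type*} [LinearOrder α] {s A B : Finset α} {x : α}
    (hs : {h ∈ s | h < x} ⊆ B) (hA : A ⊆ B) (hxA : ∀ a ∈ A, x ≤ a) :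
    #{h ∈ s | h < x} + #A ≤ #B := by
  rw [← card_union_of_disjoint]
  · exact card_le_card (union_subset hs hA)
  · exact disjoint_left.2 fun a ha haA => (mem_filter.1 ha).2.not_ge (hxA a haA)

theorem Finset.val_orderIsoOfFin_symm_apply {α : Type*} [LinearOrder α] (s : Finset α) {k : ℕ}
    (h : #s = k) {x : α} (hx : x ∈ s) :
    ((s.orderIsoOfFin h).symm ⟨x, hx⟩ : ℕ) = #{y ∈ s | y < x} := by
  set e := s.orderIsoOfFin h
  have himage : {y ∈ s | y < x} = (Iio (e.symm ⟨x, hx⟩)).image fun i => (e i : α) := by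
    ext y
    simp only [mem_filter, mem_image, mem_Iio]
    constructor
    · rintro ⟨hy, hyx⟩
      exact ⟨e.symm ⟨y, hy⟩, e.symm.lt_iff_lt.2 hyx, by simp⟩
    · rintro ⟨i, hi, rfl⟩
      exact ⟨(e i).2, Subtype.coe_lt_coe.2 (by simpa using e.lt_iff_lt.2 hi)⟩
  rw [himage, card_image_of_injective _ fun i j hij => e.injective (Subtype.ext hij),
    Fin.card_Iio]

section Tournament

variable {V : Type*} {r : V → V → Prop}

def PPRespects {α : Type*} [LT α] (r : V → V → Prop) (π : V → Option α) : Prop :=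
  ∀ ⦃u v : V⦄ ⦃a b : α⦄, r u v → π u = some a → π v = some b → a < b

def HasCycle (r : V → V → Prop) (m : ℕ) (hm : 0 < m) : Prop :=
  ∃ f : Fin m → V, Function.Injective f ∧
    ∀ t : Fin m, r (f t) (f ⟨((t : ℕ) + 1) % m, Nat.mod_lt _ hm⟩)

theorem not_hasCycle_of_isTrans (htrans : IsTrans V r) (hirr : ∀ v, ¬ r v v) {m : ℕ}
    (hm : 0 < m) : ¬ HasCycle r m hm := by
  rintro ⟨f, -, hf⟩
  let x : ℕ → V := fun t => f ⟨t % m, Nat.mod_lt _ hm⟩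
  have hstep : ∀ t, r (x t) (x (t + 1)) := fun t => by
    simpa only [x, Nat.mod_add_mod] using hf ⟨t % m, Nat.mod_lt _ hm⟩
  have hreach : ∀ t, r (x 0) (x (t + 1)) := fun t => by
    induction t with
    | zero => exact hstep 0
    | succ t ih => exact htrans.trans _ _ _ ih (hstep _)
  have hround := hreach (m - 1)
  rw [Nat.sub_add_cancel hm] at hround
  exact hirr _ (by simpa only [x, Nat.mod_self, Nat.zero_mod] using hround)

structure IsTournamentOn (s : Set V) (r : V → V → Prop) : Prop where
  mem_of_rel : ∀ ⦃u v⦄, r u v → u ∈ s ∧ v ∈ s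
  asymm : ∀ ⦃u v⦄, r u v → ¬ r v u
  total : ∀ ⦃u v⦄, u ∈ s → v ∈ s → u ≠ v → r u v ∨ r v u

namespace IsTournamentOn

variable {s : Set V}

theorem irrefl (hr : IsTournamentOn s r) (v : V) : ¬ r v v := fun h => hr.asymm h h

theorem ne_of_rel (hr : IsTournamentOn s r) {u v : V} (h : r u v) : u ≠ v := by
  rintro rfl
  exact hr.irrefl u h

theorem rel_of_rel_of_rel_of_not_rel (hr : IsTournamentOn s r) {a b c : V} (hab : r a b)
    (hbc : r b c) (hca : ¬ r c a) : r a c :=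
  (hr.total (hr.mem_of_rel hab).1 (hr.mem_of_rel hbc).2
    fun hac => hr.asymm hab (hac ▸ hbc)).resolve_right hca

theorem isTrans_of_not_hasCycle_three (hr : IsTournamentOn s r)
    (h3 : ¬ HasCycle r 3 three_pos) : IsTrans V r := by
  refine ⟨fun a b c hab hbc => hr.rel_of_rel_of_rel_of_not_rel hab hbc fun hca => h3 ?_⟩
  have hab' := hr.ne_of_rel hab
  have hbc' := hr.ne_of_rel hbc
  have hca' := hr.ne_of_rel hca
  refine ⟨![a, b, c], ?_, ?_⟩
  · intro i j hij
    fin_cases i <;> fin_cases j <;> simp_all [eq_comm]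
  · intro t
    fin_cases t <;> assumption

theorem isTrans_of_ppRespects (hr : IsTournamentOn s r) {α : Type*} [LinearOrder α]
    {π : V → Option α} (hπ : ∀ v ∈ s, ∃ a, π v = some a) (hresp : PPRespects r π) :
    IsTrans V r := by
  refine ⟨fun x y z hxy hyz => ?_⟩
  obtain ⟨a, ha⟩ := hπ x (hr.mem_of_rel hxy).1
  obtain ⟨b, hb⟩ := hπ y (hr.mem_of_rel hxy).2
  obtain ⟨c, hc⟩ := hπ z (hr.mem_of_rel hyz).2
  exact hr.rel_of_rel_of_rel_of_not_rel hxy hyz fun hzx =>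
    (hresp hzx hc ha).not_gt ((hresp hxy ha hb).trans (hresp hyz hb hc))

end IsTournamentOn

end Tournament

section OrderGraph

variable {n : ℕ} (H : Finset (Fin n))

/-- A non-hole `i` lies in the interval `I_{a+1}` of the paper, where `a = holeIdx H i`. -/
def holeIdx (i : Fin n) : Fin (#H + 1) :=
  ⟨#{h ∈ H | h < i}, Nat.lt_succ_of_le (card_filter_le _ _)⟩

/-- `G_n^H(p)`: for `i ∈ I_a` and `j ∈ I_b`, the paper's `p_a` and `p_{b+1}` are
`p (holeIdx H i).castSucc` and `p (holeIdx H j).succ` (`p` is indexed from `0`). -/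
def orderGraph {β : Type*} [LinearOrder β] (p : Fin (#H + 2) → β) (u v : Fin n) : Prop :=
  u ∉ H ∧ v ∉ H ∧
    (u < v ∧ p (holeIdx H v).succ < p (holeIdx H u).castSucc ∨
      v < u ∧ ¬ p (holeIdx H u).succ < p (holeIdx H v).castSucc)

/-- Filling the holes with values ordered like the remaining entries of `p` turns such a pair
into an occurrence of `p`. -/
def IsPatternPair {α β : Type*} [LT α] [LT β] (p : Fin (#H + 2) → β)
    (π : Fin n → Option α) (u v : Fin n) : Prop :=
  u < v ∧ ∃ a b, π u = some a ∧ π v = some b ∧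
    (a < b ↔ p (holeIdx H u).castSucc < p (holeIdx H v).succ)

variable {H}

theorem holeIdx_mono : Monotone (holeIdx H) := fun _ _ hij =>
  Fin.mk_le_mk.2 (card_le_card (monotone_filter_right H fun _ _ hx => hx.trans_le hij))

theorem isTournamentOn_orderGraph {β : Type*} [LinearOrder β] (p : Fin (#H + 2) → β) :
    IsTournamentOn {i | i ∉ H} (orderGraph H p) where
  mem_of_rel _ _ h := ⟨h.1, h.2.1⟩
  asymm u v := by
    rintro ⟨-, -, ⟨huv, h⟩ | ⟨hvu, h⟩⟩ ⟨-, -, ⟨hvu', h'⟩ | ⟨huv', h'⟩⟩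
    exacts [huv.not_gt hvu', h' h, h h', hvu.not_gt huv']
  total u v hu hv huv := by
    rcases huv.lt_or_gt with huv | hvu
    · by_cases h : p (holeIdx H v).succ < p (holeIdx H u).castSucc
      exacts [Or.inl ⟨hu, hv, Or.inl ⟨huv, h⟩⟩, Or.inr ⟨hv, hu, Or.inr ⟨huv, h⟩⟩]
    · by_cases h : p (holeIdx H u).succ < p (holeIdx H v).castSucc
      exacts [Or.inr ⟨hv, hu, Or.inl ⟨hvu, h⟩⟩, Or.inl ⟨hu, hv, Or.inr ⟨hvu, h⟩⟩]

section

variable {β : Type*} [LinearOrder β] {p : Fin (#H + 2) → β} {u v : Fin n}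

theorem orderGraph_iff_of_lt (huv : u < v) (hu : u ∉ H) (hv : v ∉ H) :
    orderGraph H p u v ↔ p (holeIdx H v).succ < p (holeIdx H u).castSucc := by
  simp [orderGraph, hu, hv, huv, huv.not_gt]

theorem orderGraph_swap_iff_of_lt (hp : Function.Injective p) (huv : u < v) (hu : u ∉ H)
    (hv : v ∉ H) :
    orderGraph H p v u ↔ p (holeIdx H u).castSucc < p (holeIdx H v).succ := by
  have hne : p (holeIdx H u).castSucc ≠ p (holeIdx H v).succ :=
    hp.ne (Fin.castSucc_lt_succ_iff.2 (holeIdx_mono huv.le)).ne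
  simp [orderGraph, hu, hv, huv, huv.not_gt, le_iff_lt_or_eq, hne]

end

end OrderGraph

namespace IsPPermH

variable {n : ℕ} {H : Finset (Fin n)} {π : Fin n → Option (Fin (n - #H))}

theorem exists_eq_some (hπ : IsPPermH H π) {i : Fin n} (hi : i ∉ H) : ∃ a, π i = some a :=
  Option.ne_none_iff_exists'.1 (mt (hπ.1 i).1 hi)

theorem notMem_of_eq_some (hπ : IsPPermH H π) {i : Fin n} {a : Fin (n - #H)}
    (h : π i = some a) : i ∉ H := fun hi => by
  simp [(hπ.1 i).2 hi] at h

theorem eq_of_eq_some (hπ : IsPPermH H π) {i j : Fin n} {a : Fin (n - #H)} (hi : π i = some a)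
    (hj : π j = some a) : i = j :=
  (hπ.2 a).unique hi hj

end IsPPermH

section Characterization

variable {n : ℕ} {H : Finset (Fin n)} {π : Fin n → Option (Fin (n - #H))}

theorem ppRespects_orderGraph_iff {β : Type*} [LinearOrder β] {p : Fin (#H + 2) → β}
    (hp : Function.Injective p) (hπ : IsPPermH H π) :
    PPRespects (orderGraph H p) π ↔ ∀ u v, ¬ IsPatternPair H p π u v := by
  have hG := isTournamentOn_orderGraph (H := H) p
  constructor
  · rintro hresp u v ⟨huv, a, b, ha, hb, hab⟩
    have hu := hπ.notMem_of_eq_some ha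
    have hv := hπ.notMem_of_eq_some hb
    have hswap := orderGraph_swap_iff_of_lt hp huv hu hv
    rcases hG.total hu hv huv.ne with h | h
    · exact hG.asymm h (hswap.2 (hab.1 (hresp h ha hb)))
    · exact (hresp h hb ha).not_gt (hab.2 (hswap.1 h))
  · intro hno u v a b he ha hb
    have hu := hπ.notMem_of_eq_some ha
    have hv := hπ.notMem_of_eq_some hb
    by_contra hab
    have hba : b < a := (not_lt.1 hab).lt_of_ne fun h =>
      hG.ne_of_rel he (hπ.eq_of_eq_some ha (h ▸ hb))
    rcases (hG.ne_of_rel he).lt_or_gt with huv | hvu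
    · exact hno u v ⟨huv, a, b, ha, hb,
        iff_of_false hab ((orderGraph_iff_of_lt huv hu hv).1 he).not_gt⟩
    · exact hno v u ⟨hvu, b, a, hb, ha,
        iff_of_true hba ((orderGraph_swap_iff_of_lt hp hvu hv hu).1 he)⟩

theorem StrictMono.exists_notMem_holeIdx_lt {g : Fin (#H + 2) → Fin n} (hg : StrictMono g) :
    ∃ t, g t ∉ H ∧ (holeIdx H (g t) : ℕ) < t := by
  have hS : ({t | g t ∉ H} : Finset (Fin (#H + 2))).Nonempty := by
    by_contra hS
    simp only [not_nonempty_iff_eq_empty, filter_eq_empty_iff, mem_univ, not_not,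
      true_implies] at hS
    have := card_le_card_of_injOn (s := univ) (t := H) g (fun x _ => @hS x) hg.injective.injOn
    simp at this
  -- the last non-hole entry: the `#H + 1 - t` entries after it are holes to the right of it
  obtain ⟨t, htS, hmax⟩ := exists_max_image _ id hS
  obtain ⟨-, ht⟩ := mem_filter.1 htS
  refine ⟨t, ht, ?_⟩
  have hcount := card_filter_lt_add_card_le (s := H) (x := g t) (A := (Ioi t).image g)
    (filter_subset _ _) (fun _ hx => ?_) (fun _ hx => ?_)
  · rw [card_image_of_injective _ hg.injective, Fin.card_Ioi] at hcount
    have := t.isLt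
    simp only [holeIdx]
    omega
  · obtain ⟨w, hw, rfl⟩ := mem_image.1 hx
    by_contra h
    exact (hmax w (by simpa using h)).not_gt (mem_Ioi.1 hw)
  · obtain ⟨w, hw, rfl⟩ := mem_image.1 hx
    exact (hg (mem_Ioi.1 hw)).le

theorem StrictMono.exists_nonhole_pair {g : Fin (#H + 2) → Fin n} (hg : StrictMono g) :
    ∃ s t, s < t ∧ g s ∉ H ∧ g t ∉ H ∧
      (holeIdx H (g s)).castSucc = s ∧ (holeIdx H (g t)).succ = t := by
  have hT : ({t | g t ∉ H ∧ (holeIdx H (g t) : ℕ) < t} : Finset (Fin (#H + 2))).Nonempty := by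
    obtain ⟨t, ht⟩ := hg.exists_notMem_holeIdx_lt
    exact ⟨t, by simpa using ht⟩
  -- `t` is the first non-hole entry where `holeIdx - index` is negative, `s` the non-hole entry
  -- before it; all entries strictly between them are holes, so the drop is exactly one
  obtain ⟨t, htT, htmin⟩ := exists_min_image _ id hT
  obtain ⟨-, ht, htlt⟩ := mem_filter.1 htT
  have hmin : ∀ s < t, g s ∉ H → (s : ℕ) ≤ holeIdx H (g s) := fun s hst hs =>
    not_lt.1 fun h => (htmin s (by simpa using ⟨hs, h⟩)).not_gt hst
  have hS : ({s | s < t ∧ g s ∉ H} : Finset (Fin (#H + 2))).Nonempty := by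
    by_contra hS
    simp only [not_nonempty_iff_eq_empty, filter_eq_empty_iff, mem_univ, true_implies,
      not_and, not_not] at hS
    have hle : #((Iio t).image g) ≤ #{h ∈ H | h < g t} := card_le_card fun _ hx => by
      obtain ⟨w, hw, rfl⟩ := mem_image.1 hx
      exact mem_filter.2 ⟨hS (mem_Iio.1 hw), hg (mem_Iio.1 hw)⟩
    rw [card_image_of_injective _ hg.injective, Fin.card_Iio] at hle
    exact (htlt.trans_le hle).false
  obtain ⟨s, hsS, hsmax⟩ := exists_max_image _ id hS
  obtain ⟨-, hst, hs⟩ := mem_filter.1 hsS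
  have hgap := card_filter_lt_add_card_le (s := H) (x := g s) (A := (Ioo s t).image g)
    (B := {h ∈ H | h < g t}) (monotone_filter_right H fun _ _ h => h.trans (hg hst))
    (fun _ hx => ?_) (fun _ hx => ?_)
  · rw [card_image_of_injective _ hg.injective, Fin.card_Ioo] at hgap
    have := hmin s hst hs
    refine ⟨s, t, hst, hs, ht, Fin.ext ?_, Fin.ext ?_⟩ <;>
      simp only [holeIdx, Fin.val_castSucc, Fin.val_succ] at htlt hgap this ⊢ <;> omega
  · obtain ⟨w, hw, rfl⟩ := mem_image.1 hx
    obtain ⟨hsw, hwt⟩ := mem_Ioo.1 hw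
    refine mem_filter.2 ⟨?_, hg hwt⟩
    by_contra h
    exact (hsmax w (by simpa using ⟨hwt, h⟩)).not_gt hsw
  · obtain ⟨w, hw, rfl⟩ := mem_image.1 hx
    exact (hg (mem_Ioo.1 hw).1).le

theorem exists_isPatternPair_of_containsPat {β : Type*} [LinearOrder β] {p : Fin (#H + 2) → β}
    (hπ : IsPPermH H π) {σ : Equiv.Perm (Fin n)} (hext : IsExtension σ π)
    (hσ : ContainsPat σ p) : ∃ u v, IsPatternPair H p π u v := by
  obtain ⟨g, hg, hgp⟩ := hσ
  obtain ⟨s, t, hst, hs, ht, hs', ht'⟩ := hg.exists_nonhole_pair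
  obtain ⟨a, ha⟩ := hπ.exists_eq_some hs
  obtain ⟨b, hb⟩ := hπ.exists_eq_some ht
  refine ⟨g s, g t, hg hst, a, b, ha, hb, ?_⟩
  rw [hs', ht', ← hgp, hext _ _ _ _ ha hb]

theorem not_ppAvoids_of_fill {α β γ : Type*} [LinearOrder α] [LinearOrder β] [LinearOrder γ]
    {ℓ : ℕ} {π : Fin n → Option α} {p : Fin ℓ → β} (hp : Function.Injective p)
    (hπ : ∀ ⦃i j a⦄, π i = some a → π j = some a → i = j) {f : α → γ} (hf : StrictMono f)
    {val : Fin n → γ} (hval : ∀ ⦃i a⦄, π i = some a → val i = f a) {g : Fin ℓ → Fin n}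
    (hg : StrictMono g) (hgp : ∀ w w', val (g w) < val (g w') ↔ p w < p w') :
    ¬ PPAvoids π p := by
  obtain ⟨σ, hσ⟩ := exists_perm_lt_iff val
  refine fun h => h σ (fun i j a b ha hb => ?_) ⟨g, hg, fun w w' => ?_⟩
  · have hij : val i = val j → i = j := fun h => by
      rw [hval ha, hval hb] at h
      exact hπ ha (hf.injective h ▸ hb)
    rw [hσ i j hij, hval ha, hval hb, hf.lt_iff_lt]
  · have hij : val (g w) = val (g w') → g w = g w' := fun h => by
      rw [hp (le_antisymm (not_lt.1 ((hgp w' w).not.1 h.not_gt))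
        (not_lt.1 ((hgp w w').not.1 h.not_lt)))]
    rw [hσ _ _ hij, hgp]

theorem not_ppAvoids_of_isPatternPair {m : ℕ} {p : Fin (#H + 2) → Fin m}
    (hp : Function.Injective p) (hπ : IsPPermH H π) {u v : Fin n}
    (huv : IsPatternPair H p π u v) : ¬ PPAvoids π p := by
  obtain ⟨huv, a, b, ha, hb, hab⟩ := huv
  have hu := hπ.notMem_of_eq_some ha
  have hv := hπ.notMem_of_eq_some hb
  set α := (holeIdx H u).castSucc
  set β := (holeIdx H v).succ
  have hαβ : α < β := Fin.castSucc_lt_succ_iff.2 (holeIdx_mono huv.le)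
  obtain ⟨ψ, hψ, hψa, hψb⟩ := exists_rat_lt_iff_of_two_values hp hαβ.ne
    (y₁ := ((a : ℕ) : ℚ)) (y₂ := ((b : ℕ) : ℚ))
    (by exact_mod_cast Fin.val_ne_of_ne fun h : a = b => huv.ne (hπ.eq_of_eq_some ha (h ▸ hb)))
    (by simpa using hab)
  -- `e` enumerates the holes together with `u` and `v`, which come `α`-th and `β`-th
  set T := insert u (insert v H)
  have hT : #T = #H + 2 := by
    rw [card_insert_of_notMem (by simp [huv.ne, hu]), card_insert_of_notMem hv]
  set e := T.orderIsoOfFin hT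
  have heu : e.symm ⟨u, mem_insert_self _ _⟩ = α := Fin.ext <| by
    rw [val_orderIsoOfFin_symm_apply]
    simp [T, filter_insert, huv.not_gt, α, holeIdx]
  have hev : e.symm ⟨v, mem_insert_of_mem (mem_insert_self _ _)⟩ = β := Fin.ext <| by
    rw [val_orderIsoOfFin_symm_apply]
    simp [T, filter_insert, huv, hu, β, holeIdx]
  set val : Fin n → ℚ := fun i =>
    if hi : i ∈ T then ψ (e.symm ⟨i, hi⟩) else (π i).elim 0 fun c => ((c : ℕ) : ℚ)
  refine not_ppAvoids_of_fill hp (fun i j c => hπ.eq_of_eq_some) (f := fun c => ((c : ℕ) : ℚ))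
    (fun c d h => Nat.cast_lt.2 h) (val := val) (fun i c hc => ?_) (g := fun w => e w)
    (fun w w' h => e.lt_iff_lt.2 h) (fun w w' => ?_)
  · by_cases hi : i ∈ T
    · have hiH := hπ.notMem_of_eq_some hc
      simp only [val, dif_pos hi]
      rcases mem_insert.1 hi with rfl | hi'
      · rw [heu, ← Option.some_injective _ (ha.symm.trans hc)]
        exact hψa
      · obtain rfl := (mem_insert.1 hi').resolve_right hiH
        rw [hev, ← Option.some_injective _ (hb.symm.trans hc)]
        exact hψb
    · simp [val, hi, hc]
  · simp [val, hψ]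

theorem ppAvoids_iff_ppRespects_orderGraph {m : ℕ} {p : Fin (#H + 2) → Fin m}
    (hp : Function.Injective p) (hπ : IsPPermH H π) :
    PPAvoids π p ↔ PPRespects (orderGraph H p) π := by
  rw [ppRespects_orderGraph_iff hp hπ]
  refine ⟨fun h u v huv => not_ppAvoids_of_isPatternPair hp hπ huv h, fun h σ hext hσ => ?_⟩
  obtain ⟨u, v, huv⟩ := exists_isPatternPair_of_containsPat hπ hext hσ
  exact h u v huv

end Characterization

section Counting

variable {n : ℕ} {H : Finset (Fin n)} {r : Fin n → Fin n → Prop}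

theorem IsPPermH.val_eq_card_of_ppRespects [DecidableRel r] {π : Fin n → Option (Fin (n - #H))}
    (hπ : IsPPermH H π) (hr : IsTournamentOn {i | i ∉ H} r) (hresp : PPRespects r π)
    {i : Fin n} {a : Fin (n - #H)} (ha : π i = some a) : (a : ℕ) = #{j | r j i} := by
  have hinj : Set.InjOn π ({j | r j i} : Finset (Fin n)) := fun j hj j' _ h => by
    obtain ⟨b, hb⟩ := hπ.exists_eq_some (hr.mem_of_rel (mem_filter.1 hj).2).1
    exact hπ.eq_of_eq_some hb (h ▸ hb)
  have himage : ({j | r j i} : Finset (Fin n)).image π = (Iio a).image some := by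
    ext o
    simp only [mem_image, mem_filter, mem_univ, true_and, mem_Iio]
    constructor
    · rintro ⟨j, hji, rfl⟩
      obtain ⟨b, hb⟩ := hπ.exists_eq_some (hr.mem_of_rel hji).1
      exact ⟨b, hresp hji hb ha, hb.symm⟩
    · rintro ⟨b, hba, rfl⟩
      obtain ⟨j, hj, -⟩ := hπ.2 b
      have hji : j ≠ i := by
        rintro rfl
        exact hba.ne (Option.some_injective _ (hj.symm.trans ha))
      refine ⟨j, ?_, hj⟩
      exact (hr.total (hπ.notMem_of_eq_some hj) (hπ.notMem_of_eq_some ha) hji).resolve_right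
        fun hij => (hresp hij ha hj).not_gt hba
  rw [← Fin.card_Iio a, ← card_image_of_injective _ (Option.some_injective _), ← himage,
    card_image_of_injOn hinj]

theorem card_filter_rel_lt_of_rel {V : Type*} [Fintype V] {r : V → V → Prop} [DecidableRel r]
    (htrans : IsTrans V r) (hirr : ∀ v, ¬ r v v) {i j : V} (hij : r i j) :
    #{k | r k i} < #{k | r k j} :=
  card_lt_card <| (ssubset_iff_of_subset
    (monotone_filter_right _ fun _ _ hki => htrans.trans _ _ _ hki hij)).2
      ⟨i, by simpa using hij, by simpa using hirr i⟩

theorem IsTournamentOn.card_filter_rel_lt [DecidableRel r] (hr : IsTournamentOn {i | i ∉ H} r)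
    {i : Fin n} (hi : i ∉ H) : #{j | r j i} < n - #H := by
  have hiH : i ∈ Hᶜ := by simpa
  have hle : #{j | r j i} ≤ #(Hᶜ.erase i) := card_le_card fun j hj => by
    have hji := (mem_filter.1 hj).2
    simpa [hr.ne_of_rel hji] using (hr.mem_of_rel hji).1
  have hpos := card_pos.2 ⟨i, hiH⟩
  rw [card_erase_of_mem hiH] at hle
  rw [card_compl, Fintype.card_fin] at hle hpos
  omega

theorem exists_ppRespects_of_isTrans (hr : IsTournamentOn {i | i ∉ H} r)
    (htrans : IsTrans (Fin n) r) : ∃ π, IsPPermH H π ∧ PPRespects r π := by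
  classical
  set rank : Fin n → ℕ := fun i => #{j | r j i}
  have hrank_lt : ∀ i ∉ H, rank i < n - #H := fun i hi => hr.card_filter_rel_lt hi
  have hrank_inj : Set.InjOn rank ↑Hᶜ := fun i hi j hj h => by
    by_contra hij
    rcases hr.total (by simpa using hi) (by simpa using hj) hij with hr' | hr'
    exacts [(card_filter_rel_lt_of_rel htrans hr.irrefl hr').ne h,
      (card_filter_rel_lt_of_rel htrans hr.irrefl hr').ne' h]
  have hrank_surj : Set.SurjOn rank ↑Hᶜ ↑(range (n - #H)) :=
    surjOn_of_injOn_of_card_le _ (fun i hi => by simpa using hrank_lt i (by simpa using hi))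
      hrank_inj (by simp [card_compl])
  refine ⟨fun i => if hi : i ∈ H then none else some ⟨rank i, hrank_lt i hi⟩, ⟨fun i => ?_,
    fun c => ?_⟩, fun u v a b huv ha hb => ?_⟩
  · by_cases hi : i ∈ H <;> simp [hi]
  · obtain ⟨i, hi, hic⟩ := hrank_surj (by simp : (c : ℕ) ∈ range (n - #H))
    have hi' : i ∉ H := by simpa using hi
    refine ⟨i, by simp [hi', hic], fun j hj => ?_⟩
    have hj' : j ∉ H := fun h => by simp [h] at hj
    simp only [hj', dite_false, Option.some.injEq, Fin.ext_iff] at hj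
    exact hrank_inj (by simpa using hj') hi (hj.trans hic.symm)
  · have hu : u ∉ H := (hr.mem_of_rel huv).1
    have hv : v ∉ H := (hr.mem_of_rel huv).2
    simp only [hu, hv, dite_false, Option.some.injEq] at ha hb
    rw [← ha, ← hb, Fin.mk_lt_mk]
    exact card_filter_rel_lt_of_rel htrans hr.irrefl huv

theorem existsUnique_ppRespects_of_isTrans (hr : IsTournamentOn {i | i ∉ H} r)
    (htrans : IsTrans (Fin n) r) : ∃! π, IsPPermH H π ∧ PPRespects r π := by
  classical
  obtain ⟨π, hπ, hresp⟩ := exists_ppRespects_of_isTrans hr htrans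
  refine ⟨π, ⟨hπ, hresp⟩, fun π' ⟨hπ', hresp'⟩ => funext fun i => ?_⟩
  by_cases hi : i ∈ H
  · rw [(hπ'.1 i).2 hi, (hπ.1 i).2 hi]
  · obtain ⟨a, ha⟩ := hπ.exists_eq_some hi
    obtain ⟨a', ha'⟩ := hπ'.exists_eq_some hi
    rw [ha, ha', Fin.ext ((hπ'.val_eq_card_of_ppRespects hr hresp' ha').trans
      (hπ.val_eq_card_of_ppRespects hr hresp ha).symm)]

end Counting

theorem snH_eq_one_iff_isTrans {n : ℕ} {H : Finset (Fin n)} {p : Fin (#H + 2) → Fin (#H + 2)}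
    (hp : Function.Injective p) : snH H p = 1 ↔ IsTrans (Fin n) (orderGraph H p) := by
  have hG := isTournamentOn_orderGraph (H := H) p
  have hcard : snH H p = Nat.card {π // IsPPermH H π ∧ PPRespects (orderGraph H p) π} :=
    Nat.card_congr <| Equiv.subtypeEquivRight fun π =>
      and_congr_right fun hπ => ppAvoids_iff_ppRespects_orderGraph hp hπ
  rw [hcard, Nat.card_eq_one_iff_unique]
  constructor
  · rintro ⟨-, ⟨π, hπ, hresp⟩⟩
    exact hG.isTrans_of_ppRespects (fun i hi => hπ.exists_eq_some hi) hresp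
  · intro htrans
    obtain ⟨π, hπ, huniq⟩ := existsUnique_ppRespects_of_isTrans hG htrans
    exact ⟨⟨fun x y => Subtype.ext ((huniq _ x.2).trans (huniq _ y.2).symm)⟩, ⟨⟨π, hπ⟩⟩⟩

/-- For a pattern `p` of length `k+2` and hole set `H` of size `k`, with the
order graph `G_n^H(p)` (a tournament on the non-hole positions), the following
are equivalent: `s_n^H(p) = 1`; the order graph has no directed cycle; the
order graph has no directed cycle of length 3. -/
theorem order_graph_characterization (n k : ℕ) (p : Fin (k + 2) → Fin (k + 2))
    (hp : Function.Bijective p)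
    (H : Finset (Fin n)) (hH : H.card = k)
    (fwd : Fin n → Fin n → Prop)
    (hfwd : ∀ i j : Fin n, fwd i j ↔
      p ⟨(H.filter (· < j)).card + 1, by
          have := Finset.card_filter_le H (· < j); omega⟩
        < p ⟨(H.filter (· < i)).card, by
          have := Finset.card_filter_le H (· < i); omega⟩)
    (edge : Fin n → Fin n → Prop)
    (hedge : ∀ u v : Fin n, edge u v ↔
      u ∉ H ∧ v ∉ H ∧ ((u < v ∧ fwd u v) ∨ (v < u ∧ ¬ fwd v u)))
    (hasCycle : ℕ → Prop)
    (hcyc : ∀ (m : ℕ) (hm : 0 < m), hasCycle m ↔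
      ∃ f : Fin m → Fin n, Function.Injective f ∧
        ∀ t : Fin m, edge (f t) (f ⟨((t : ℕ) + 1) % m, Nat.mod_lt _ hm⟩)) :
    (snH H p = 1 ↔ ¬ ∃ m, 0 < m ∧ hasCycle m) ∧
    ((¬ ∃ m, 0 < m ∧ hasCycle m) ↔ ¬ hasCycle 3) := by
  subst hH
  obtain rfl : edge = orderGraph H p := by
    ext u v
    rw [hedge, hfwd, hfwd]
    rfl
  have hG := isTournamentOn_orderGraph (H := H) p
  have hacyclic : IsTrans (Fin n) (orderGraph H p) → ¬ ∃ m, 0 < m ∧ hasCycle m :=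
    fun htrans ⟨m, hm, hc⟩ => not_hasCycle_of_isTrans htrans hG.irrefl hm ((hcyc m hm).1 hc)
  have htrans : ¬ hasCycle 3 → IsTrans (Fin n) (orderGraph H p) :=
    fun h3 => hG.isTrans_of_not_hasCycle_three (mt (hcyc 3 three_pos).2 h3)
  rw [snH_eq_one_iff_isTrans hp.injective]
  exact ⟨⟨hacyclic, fun h => htrans fun h3 => h ⟨3, three_pos, h3⟩⟩,
    ⟨fun h h3 => h ⟨3, three_pos, h3⟩, fun h => hacyclic (htrans h)⟩⟩
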